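/- arXiv:1312.2043 — 2 statements merged into one kernel-verified Lean document; each statement's English description precedes it below -/
import Mathlib

section
/- For a = 1 and 0 ≤ b < 1, the polynomial λ^3 + bλ^2 + λ + 1 has a pair of non-real complex conjugate roots with positive real part. -/
open Complex

/-- For 0 ≤ b < 1, λ³ + bλ² + λ + 1 has a pair of non-real complex conjugate roots
with positive real part. -/
theorem complex_conjugate_roots_positive_re (b : ℝ) (hb0 : 0 ≤ b) (hb1 : b < 1) :
    ∃ z : ℂ, z.im ≠ 0 ∧ 0 < z.re ∧
      z ^ 3 + (b : ℂ) * z ^ 2 + z + 1 = 0 ∧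
      (starRingEnd ℂ z) ^ 3 + (b : ℂ) * (starRingEnd ℂ z) ^ 2 + starRingEnd ℂ z + 1 = 0 := by
  -- the real cubic
  have hcont : ContinuousOn (fun x : ℝ => x ^ 3 + b * x ^ 2 + x + 1) (Set.Icc (-2) (-b)) := by
    fun_prop
  have h2b : (-2 : ℝ) ≤ -b := by linarith
  obtain ⟨r, hr, hroot⟩ := intermediate_value_Icc h2b hcont
    (by constructor <;> simp <;> nlinarith : (0 : ℝ) ∈ Set.Icc ((-2:ℝ) ^ 3 + b * (-2:ℝ) ^ 2 + (-2) + 1) ((-b) ^ 3 + b * (-b) ^ 2 + (-b) + 1))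
  have hroot : r ^ 3 + b * r ^ 2 + r + 1 = 0 := hroot
  have hrb : r < -b := lt_of_le_of_ne hr.2 (by
    intro h
    rw [h] at hroot
    nlinarith)
  have hD : 0 < 3 * r ^ 2 + 2 * b * r + 4 - b ^ 2 := by
    nlinarith [sq_nonneg (3 * r + b), sq_nonneg b]
  set s : ℝ := Real.sqrt (3 * r ^ 2 + 2 * b * r + 4 - b ^ 2) with hs_def
  have hs_pos : 0 < s := Real.sqrt_pos.mpr hD
  have hs : s ^ 2 = 3 * r ^ 2 + 2 * b * r + 4 - b ^ 2 := Real.sq_sqrt hD.le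
  refine ⟨(-(b : ℂ) - (r : ℂ) + (s : ℂ) * I) / 2, ?_, ?_, ?_, ?_⟩
  · simp [div_im]
    positivity
  · simp [div_re]
    linarith
  · have hsC : ((s : ℂ)) ^ 2 = 3 * (r:ℂ) ^ 2 + 2 * (b:ℂ) * (r:ℂ) + 4 - (b:ℂ) ^ 2 := by
      exact_mod_cast congrArg (Complex.ofReal) hs
    have hw : ((s : ℂ) * I) ^ 2 = -(3 * (r:ℂ) ^ 2 + 2 * (b:ℂ) * (r:ℂ) + 4 - (b:ℂ) ^ 2) := by
      rw [mul_pow, I_sq]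
      linear_combination -hsC
    have hroot' : (r : ℂ) ^ 3 + (b : ℂ) * (r : ℂ) ^ 2 + (r : ℂ) + 1 = 0 := by
      exact_mod_cast congrArg (Complex.ofReal) hroot
    linear_combination hroot' + (((-(b : ℂ) - (r : ℂ) + (s : ℂ) * I) / 2 - (r:ℂ)) / 4) * hw
  · have hconj : (starRingEnd ℂ) ((-(b : ℂ) - (r : ℂ) + (s : ℂ) * I) / 2)
        = (-(b : ℂ) - (r : ℂ) - (s : ℂ) * I) / 2 := by
      simp [Complex.ext_iff, div_im, div_re]
      constructor <;> ring
    rw [hconj]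
    have hsC : ((s : ℂ)) ^ 2 = 3 * (r:ℂ) ^ 2 + 2 * (b:ℂ) * (r:ℂ) + 4 - (b:ℂ) ^ 2 := by
      exact_mod_cast congrArg (Complex.ofReal) hs
    have hw : (-((s : ℂ) * I)) ^ 2 = -(3 * (r:ℂ) ^ 2 + 2 * (b:ℂ) * (r:ℂ) + 4 - (b:ℂ) ^ 2) := by
      rw [neg_pow, mul_pow, I_sq]
      linear_combination -hsC
    have hroot' : (r : ℂ) ^ 3 + (b : ℂ) * (r : ℂ) ^ 2 + (r : ℂ) + 1 = 0 := by
      exact_mod_cast congrArg (Complex.ofReal) hroot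
    linear_combination hroot' + (((-(b : ℂ) - (r : ℂ) - (s : ℂ) * I) / 2 - (r:ℂ)) / 4) * hw
end

section
/- For a = 1 and 0 ≤ b < 1, the polynomial λ^3 + bλ^2 + λ - 2 has a pair of non-real complex conjugate roots with negative real part. -/
open Complex

/-- For 0 ≤ b < 1, λ³ + bλ² + λ - 2 has a pair of non-real complex conjugate roots
with negative real part. -/
theorem complex_conjugate_roots_negative_re (b : ℝ) (hb0 : 0 ≤ b) (hb1 : b < 1) :
    ∃ z : ℂ, z.im ≠ 0 ∧ z.re < 0 ∧
      z ^ 3 + (b : ℂ) * z ^ 2 + z - 2 = 0 ∧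
      (starRingEnd ℂ z) ^ 3 + (b : ℂ) * (starRingEnd ℂ z) ^ 2 + starRingEnd ℂ z - 2 = 0 := by
  -- real root r ∈ (0,2]
  have hcont : Continuous fun x : ℝ => x ^ 3 + b * x ^ 2 + x - 2 := by continuity
  have hiv := intermediate_value_Icc (by norm_num : (0:ℝ) ≤ 2) hcont.continuousOn
  have hmem : (0:ℝ) ∈ Set.Icc ((0:ℝ)^3 + b*0^2 + 0 - 2) ((2:ℝ)^3 + b*2^2 + 2 - 2) := by
    constructor <;> nlinarith
  obtain ⟨r, hrIcc, hr0⟩ := hiv hmem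
  have hrpos : 0 < r := by
    rcases lt_or_eq_of_le hrIcc.1 with h | h
    · exact h
    · exfalso; rw [← h] at hr0; norm_num at hr0
  -- discriminant
  have hd : 0 < 4 * (r^2 + b*r + 1) - (b + r)^2 := by nlinarith
  set s : ℝ := Real.sqrt (4 * (r^2 + b*r + 1) - (b + r)^2) / 2 with hs
  have hspos : 0 < s := by positivity
  have hs2 : s ^ 2 = (r^2 + b*r + 1) - ((b + r)/2)^2 := by
    rw [hs, div_pow, Real.sq_sqrt hd.le]; ring
  refine ⟨(↑(-(b+r)/2) : ℂ) + (s : ℂ) * Complex.I, ?_, ?_, ?_, ?_⟩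
  · simp [hspos.ne']
  · simp only [Complex.add_re, Complex.ofReal_re, Complex.mul_re, Complex.I_re,
      Complex.I_im, Complex.ofReal_im]
    have : 0 < b + r := by linarith
    nlinarith
  · have hs2C : (s:ℂ)^2 = ((r:ℂ)^2 + (b:ℂ)*r + 1) - (((b:ℂ) + r)/2)^2 := by
      exact_mod_cast congrArg (Complex.ofReal) hs2
    have hrC : (r:ℂ)^3 + (b:ℂ)*(r:ℂ)^2 + r - 2 = 0 := by
      exact_mod_cast congrArg (Complex.ofReal) hr0
    push_cast
    linear_combination ((-(b:ℂ)-r)/2 + s*Complex.I - r) * ((s:ℂ)^2 * Complex.I_sq - hs2C) + hrC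
  · have hs2C : (s:ℂ)^2 = ((r:ℂ)^2 + (b:ℂ)*r + 1) - (((b:ℂ) + r)/2)^2 := by
      exact_mod_cast congrArg (Complex.ofReal) hs2
    have hrC : (r:ℂ)^3 + (b:ℂ)*(r:ℂ)^2 + r - 2 = 0 := by
      exact_mod_cast congrArg (Complex.ofReal) hr0
    simp only [map_add, map_mul, Complex.conj_ofReal, Complex.conj_I]
    push_cast
    linear_combination ((-(b:ℂ)-r)/2 - s*Complex.I - r) * ((s:ℂ)^2 * Complex.I_sq - hs2C) + hrC
end
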